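/- Let q be a prime power and let k ≥ b ≥ 1 be integers. Then there is no F_q-linear code of length q^k - 1 and dimension k + 1 whose minimum b-symbol distance is greater than or equal to q^k - q^{k-b}. In particular, a code of length q^k - 1, dimension k + 1 and minimum b-symbol distance q^k - q^{k-b} - 1 is distance-optimal. -/

import Mathlib

/-- The `b`-symbol weight of a vector `c ∈ F^n` (coordinates indexed cyclically by `ZMod n`). -/
noncomputable def bWt {n : ℕ} {F : Type*} [Zero F] (b : ℕ) (c : ZMod n → F) : ℕ :=
  Nat.card {i : ZMod n | ∃ j < b, c (i + (j : ZMod n)) ≠ 0}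

/-!
A Plotkin-type averaging argument. In a linear code `C` of dimension `m` over `F_q`, reading the
window `(c_i, …, c_{i+b-1})` is a linear map of rank at most `b`, so at most `q^m - q^(m-b)`
codewords have a nonzero window at position `i`. Summing over the `n` positions bounds the total
`b`-symbol weight of `C` by `n (q^m - q^(m-b))`, while a minimum `b`-symbol distance `d` bounds
it below by `(q^m - 1) d`. For `n = q^k - 1`, `m = k + 1` and `d = q^k - q^(k-b)` the upper bound
equals `(q^(k+1) - q) d`, which is smaller than the lower bound.
-/

open Finset Module

theorem card_filter_ne_zero_le {F V W : Type*} [Field F] [Fintype F]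
    [AddCommGroup V] [Module F V] [Fintype V]
    [AddCommGroup W] [Module F W] [FiniteDimensional F W] [DecidableEq W] (f : V →ₗ[F] W) :
    #{v | f v ≠ 0} ≤
      Fintype.card F ^ finrank F V - Fintype.card F ^ (finrank F V - finrank F W) := by
  classical
  have hker : Fintype.card F ^ (finrank F V - finrank F W) ≤ #{v | f v = 0} := by
    have hrank := f.finrank_range_add_finrank_ker
    have hrange := Submodule.finrank_le (LinearMap.range f)
    calc Fintype.card F ^ (finrank F V - finrank F W)
        ≤ Fintype.card F ^ finrank F (LinearMap.ker f) :=
          Nat.pow_le_pow_right Fintype.card_pos (by omega)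
      _ = Fintype.card (LinearMap.ker f) := (card_eq_pow_finrank (K := F)).symm
      _ = #{v | f v = 0} := by
          rw [← Fintype.card_subtype]; exact Fintype.card_congr (Equiv.refl _)
  have hsplit : #{v | f v = 0} + #{v | f v ≠ 0} = Fintype.card F ^ finrank F V := by
    rw [← card_eq_pow_finrank (K := F), ← card_univ]
    exact card_filter_add_card_filter_not _
  omega

section Windows

variable {F : Type*} [Field F] {n : ℕ}

def window (b : ℕ) (i : ZMod n) : (ZMod n → F) →ₗ[F] (Fin b → F) :=
  LinearMap.pi fun j : Fin b => LinearMap.proj (i + (j : ℕ))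

theorem window_ne_zero_iff {b : ℕ} {i : ZMod n} {c : ZMod n → F} :
    window b i c ≠ 0 ↔ ∃ j < b, c (i + (j : ZMod n)) ≠ 0 := by
  simp [window, funext_iff, Fin.exists_iff]

theorem bWt_eq_card_window_ne_zero [NeZero n] [DecidableEq F] (b : ℕ) (c : ZMod n → F) :
    bWt b c = #{i | window b i c ≠ 0} := by
  simp_rw [bWt, window_ne_zero_iff, ← Fintype.card_subtype, Nat.card_eq_fintype_card]
  rfl

theorem pow_finrank_sub_one_mul_le_of_le_bWt [Fintype F] [NeZero n] (b d : ℕ)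
    (C : Submodule F (ZMod n → F)) (hd : ∀ c ∈ C, c ≠ 0 → d ≤ bWt b c) :
    (Fintype.card F ^ finrank F C - 1) * d ≤
      n * (Fintype.card F ^ finrank F C - Fintype.card F ^ (finrank F C - b)) := by
  classical
  calc (Fintype.card F ^ finrank F C - 1) * d = #{c : C | c ≠ 0} • d := by
        rw [filter_ne', card_erase_of_mem (mem_univ 0), card_univ,
          card_eq_pow_finrank (K := F) (V := C), smul_eq_mul]
    _ ≤ ∑ c ∈ {c : C | c ≠ 0}, bWt b (c : ZMod n → F) :=
        card_nsmul_le_sum _ _ _ fun c hc => hd c c.2 (by simpa using hc)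
    _ ≤ ∑ c : C, bWt b (c : ZMod n → F) := sum_le_sum_of_subset (filter_subset _ _)
    _ = ∑ i : ZMod n, #{c : C | window b i (c : ZMod n → F) ≠ 0} := by
        simp only [bWt_eq_card_window_ne_zero, card_filter]
        exact sum_comm
    _ ≤ ∑ _i : ZMod n, (Fintype.card F ^ finrank F C - Fintype.card F ^ (finrank F C - b)) :=
        sum_le_sum fun i _ => by
          have := card_filter_ne_zero_le ((window b i).comp C.subtype)
          rwa [finrank_fin_fun] at this
    _ = _ := by rw [sum_const, card_univ, ZMod.card, smul_eq_mul]

end Windows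

theorem pow_sub_one_mul_lt_pow_succ_sub_one_mul {q k b : ℕ}
    (hq : 2 ≤ q) (hb : 1 ≤ b) (hkb : b ≤ k) :
    (q ^ k - 1) * (q ^ (k + 1) - q ^ (k + 1 - b)) < (q ^ (k + 1) - 1) * (q ^ k - q ^ (k - b)) := by
  have hd : 0 < q ^ k - q ^ (k - b) :=
    Nat.sub_pos_of_lt (Nat.pow_lt_pow_right hq (by omega))
  have hqk : q ≤ q ^ (k + 1) := Nat.le_self_pow (by omega) q
  calc (q ^ k - 1) * (q ^ (k + 1) - q ^ (k + 1 - b))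
      = (q ^ (k + 1) - q) * (q ^ k - q ^ (k - b)) := by
        have hq' : q ^ k * q - q = (q ^ k - 1) * q := by rw [Nat.sub_mul, one_mul]
        rw [show k + 1 - b = k - b + 1 by omega, pow_succ, pow_succ, ← Nat.sub_mul, hq']
        ring
    _ < (q ^ (k + 1) - 1) * (q ^ k - q ^ (k - b)) :=
        Nat.mul_lt_mul_of_pos_right (by omega) hd

/-- There is no `F_q`-linear code of length `q^k - 1` and dimension `k+1` all of whose
nonzero codewords have `b`-symbol weight `≥ q^k - q^{k-b}` (i.e. with minimum `b`-symbol
distance `≥ q^k - q^{k-b}`). -/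
theorem stmt13 (q k b : ℕ) (hb : 1 ≤ b) (hkb : b ≤ k)
    (F : Type*) [Field F] [Fintype F] (hF : Fintype.card F = q) :
    ¬ ∃ C : Submodule F (ZMod (q ^ k - 1) → F),
        Module.finrank F C = k + 1 ∧
        ∀ c ∈ C, c ≠ 0 → q ^ k - q ^ (k - b) ≤ bWt b c := by
  rintro ⟨C, hC, hmin⟩
  have hq : 2 ≤ q := hF ▸ Fintype.one_lt_card
  have : NeZero (q ^ k - 1) := ⟨(Nat.sub_pos_of_lt (Nat.one_lt_pow (by omega) hq)).ne'⟩
  have hbound := pow_finrank_sub_one_mul_le_of_le_bWt b _ C hmin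
  rw [hF, hC] at hbound
  exact (pow_sub_one_mul_lt_pow_succ_sub_one_mul hq hb hkb).not_ge hbound
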